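/- arXiv:2303.01882 — 3 statements merged into one kernel-verified Lean document; each statement's English description precedes it below -/
import Mathlib

section
/- There are exactly 14 quadruples (a₀,a₁,a₂,a₃) of positive integers with a₀ ≤ a₁ ≤ a₂ ≤ a₃, such that any three of the four integers are coprime (well-formedness), and each aᵢ divides a₀+a₁+a₂+a₃; namely (1,1,1,1), (1,1,1,3), (1,1,4,6), (1,2,2,5), (1,1,2,4), (1,3,4,4), (1,1,2,2), (2,3,3,4), (1,4,5,10), (1,2,6,9), (1,2,3,6), (1,3,8,12), (1,6,14,21), (2,3,10,15). -/
/-!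
With `σ = a₀ + a₁ + a₂ + a₃` and `σ = aᵢ kᵢ`, the integers `k₀ ≥ k₁ ≥ k₂ ≥ k₃ ≥ 2` satisfy
`1/k₀ + 1/k₁ + 1/k₂ + 1/k₃ = 1`, which has exactly 14 sorted solutions: `k₃ ≤ 4`, `k₂ ≤ 6`,
`k₁ ≤ 12`, and then `k₀` is determined. Each `kᵢ` divides `σ`, and `σ` divides `L · aᵢ` for
`L = lcm(k₀, k₁, k₂)`, so `σ ∣ L · gcd(a₀, a₁, a₂) = L`; hence `σ = L` and `aᵢ = L / kᵢ`.
-/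

/-- `1/k₀ + 1/k₁ + 1/k₂ + 1/k₃ = 1`, with denominators cleared. -/
def EgyptianOne (k₀ k₁ k₂ k₃ : ℕ) : Prop :=
  k₁ * k₂ * k₃ + k₀ * k₂ * k₃ + k₀ * k₁ * k₃ + k₀ * k₁ * k₂ = k₀ * k₁ * k₂ * k₃

theorem egyptianOne_of_eq_mul {a b c d k₀ k₁ k₂ k₃ : ℕ} (hσ : 0 < a + b + c + d)
    (h₀ : a + b + c + d = a * k₀) (h₁ : a + b + c + d = b * k₁)
    (h₂ : a + b + c + d = c * k₂) (h₃ : a + b + c + d = d * k₃) :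
    EgyptianOne k₀ k₁ k₂ k₃ := by
  refine Nat.eq_of_mul_eq_mul_left hσ ?_
  linear_combination (k₁ * k₂ * k₃) * h₀ + (k₀ * k₂ * k₃) * h₁ + (k₀ * k₁ * k₃) * h₂ +
    (k₀ * k₁ * k₂) * h₃

theorem EgyptianOne.sorted_classification {k₀ k₁ k₂ k₃ : ℕ} (h : EgyptianOne k₀ k₁ k₂ k₃)
    (h₃ : 2 ≤ k₃) (h₂₃ : k₃ ≤ k₂) (h₁₂ : k₂ ≤ k₁) (h₀₁ : k₁ ≤ k₀) :
    (k₀, k₁, k₂, k₃) = (42, 7, 3, 2) ∨ (k₀, k₁, k₂, k₃) = (24, 8, 3, 2) ∨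
    (k₀, k₁, k₂, k₃) = (18, 9, 3, 2) ∨ (k₀, k₁, k₂, k₃) = (15, 10, 3, 2) ∨
    (k₀, k₁, k₂, k₃) = (12, 12, 3, 2) ∨ (k₀, k₁, k₂, k₃) = (20, 5, 4, 2) ∨
    (k₀, k₁, k₂, k₃) = (12, 6, 4, 2) ∨ (k₀, k₁, k₂, k₃) = (8, 8, 4, 2) ∨
    (k₀, k₁, k₂, k₃) = (10, 5, 5, 2) ∨ (k₀, k₁, k₂, k₃) = (6, 6, 6, 2) ∨
    (k₀, k₁, k₂, k₃) = (12, 4, 3, 3) ∨ (k₀, k₁, k₂, k₃) = (6, 6, 3, 3) ∨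
    (k₀, k₁, k₂, k₃) = (6, 4, 4, 3) ∨ (k₀, k₁, k₂, k₃) = (4, 4, 4, 4) := by
  unfold EgyptianOne at h
  have hpos : 0 < k₀ * k₁ := Nat.mul_pos (by omega) (by omega)
  have hk₃_le : k₃ ≤ 4 := by
    refine Nat.le_of_mul_le_mul_left (c := k₀ * k₁ * k₂) ?_ (Nat.mul_pos hpos (by omega))
    nlinarith [Nat.mul_le_mul_left (k₁ * k₂) (h₂₃.trans (h₁₂.trans h₀₁)),
      Nat.mul_le_mul_left (k₀ * k₂) (h₂₃.trans h₁₂), Nat.mul_le_mul_left (k₀ * k₁) h₂₃]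
  have hk₂_le : k₂ ≤ 6 := by
    have : k₂ * k₃ ≤ 3 * k₃ + k₂ := by
      refine Nat.le_of_mul_le_mul_left (c := k₀ * k₁) ?_ hpos
      nlinarith [Nat.mul_le_mul_left (k₀ * k₃) (h₁₂.trans h₀₁),
        Nat.mul_le_mul_left (k₁ * k₃) h₁₂]
    nlinarith
  -- `k₂ = k₃ = 2` would leave `1/k₀ + 1/k₁ = 0`.
  have hk₂_ge : 3 ≤ k₂ := by
    by_contra! hlt
    obtain rfl : k₂ = 2 := by omega
    obtain rfl : k₃ = 2 := by omega
    omega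
  have hk₁_le : k₁ ≤ 12 := by
    have : k₁ * k₂ * k₃ ≤ 2 * k₂ * k₃ + k₁ * k₃ + k₁ * k₂ := by
      refine Nat.le_of_mul_le_mul_left (c := k₀) ?_ (by omega)
      nlinarith [Nat.mul_le_mul_left (k₂ * k₃) h₀₁]
    have h56 : 6 * (k₂ + k₃) ≤ 5 * (k₂ * k₃) := by nlinarith
    refine Nat.le_of_mul_le_mul_left (c := k₂ * k₃) ?_ (by positivity)
    nlinarith [Nat.mul_le_mul_left k₁ h56]
  interval_cases k₃ <;> interval_cases k₂ <;> interval_cases k₁ <;> norm_num <;> omega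

theorem le_of_mul_eq_mul_of_le {a b m n : ℕ} (ha : 0 < a) (hab : a ≤ b) (h : a * m = b * n) :
    n ≤ m :=
  Nat.le_of_mul_le_mul_left (h ▸ Nat.mul_le_mul_right n hab) ha

theorem eq_lcm_of_gcd_eq_one {a b c k₀ k₁ k₂ σ : ℕ} (h₀ : σ = a * k₀) (h₁ : σ = b * k₁)
    (h₂ : σ = c * k₂) (hg : Nat.gcd (Nat.gcd a b) c = 1) :
    σ = Nat.lcm (Nat.lcm k₀ k₁) k₂ := by
  have hdvd : ∀ {x k L : ℕ}, σ = x * k → k ∣ L → σ ∣ L * x := by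
    rintro x k L hσ ⟨t, ht⟩
    exact ⟨t, by rw [ht, hσ]; ring⟩
  set L := Nat.lcm (Nat.lcm k₀ k₁) k₂
  have hσL : σ ∣ L := by
    have : σ ∣ Nat.gcd (Nat.gcd (L * a) (L * b)) (L * c) := Nat.dvd_gcd
      (Nat.dvd_gcd (hdvd h₀ ((Nat.dvd_lcm_left _ _).trans (Nat.dvd_lcm_left _ _)))
        (hdvd h₁ ((Nat.dvd_lcm_right _ _).trans (Nat.dvd_lcm_left _ _))))
      (hdvd h₂ (Nat.dvd_lcm_right _ _))
    rwa [Nat.gcd_mul_left, Nat.gcd_mul_left, hg, mul_one] at this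
  exact Nat.dvd_antisymm hσL <| Nat.lcm_dvd
    (Nat.lcm_dvd (Dvd.intro_left _ h₀.symm) (Dvd.intro_left _ h₁.symm)) (Dvd.intro_left _ h₂.symm)

/-- Classification of the 14 Gorenstein weighted projective 3-space weight
quadruples: sorted quadruples of positive integers, well-formed (any three
coprime), each weight dividing the sum. -/
theorem gorenstein_wps_classification :
    {q : ℕ × ℕ × ℕ × ℕ |
      0 < q.1 ∧ q.1 ≤ q.2.1 ∧ q.2.1 ≤ q.2.2.1 ∧ q.2.2.1 ≤ q.2.2.2 ∧
      Nat.gcd (Nat.gcd q.1 q.2.1) q.2.2.1 = 1 ∧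
      Nat.gcd (Nat.gcd q.1 q.2.1) q.2.2.2 = 1 ∧
      Nat.gcd (Nat.gcd q.1 q.2.2.1) q.2.2.2 = 1 ∧
      Nat.gcd (Nat.gcd q.2.1 q.2.2.1) q.2.2.2 = 1 ∧
      q.1 ∣ (q.1 + q.2.1 + q.2.2.1 + q.2.2.2) ∧
      q.2.1 ∣ (q.1 + q.2.1 + q.2.2.1 + q.2.2.2) ∧
      q.2.2.1 ∣ (q.1 + q.2.1 + q.2.2.1 + q.2.2.2) ∧
      q.2.2.2 ∣ (q.1 + q.2.1 + q.2.2.1 + q.2.2.2)} =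
    {(1,1,1,1), (1,1,1,3), (1,1,4,6), (1,2,2,5), (1,1,2,4), (1,3,4,4),
     (1,1,2,2), (2,3,3,4), (1,4,5,10), (1,2,6,9), (1,2,3,6), (1,3,8,12),
     (1,6,14,21), (2,3,10,15)} := by
  refine Set.Subset.antisymm ?_ ?_
  · rintro ⟨a, b, c, d⟩
      ⟨ha, hab, hbc, hcd, hwf, -, -, -, ⟨k₀, hk₀⟩, ⟨k₁, hk₁⟩, ⟨k₂, hk₂⟩, ⟨k₃, hk₃⟩⟩
    dsimp only at *
    have h₃ : 1 < k₃ := Nat.lt_of_mul_lt_mul_left (a := d) (by omega)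
    have h₂₃ := le_of_mul_eq_mul_of_le (by omega) hcd (hk₂.symm.trans hk₃)
    have h₁₂ := le_of_mul_eq_mul_of_le (by omega) hbc (hk₁.symm.trans hk₂)
    have h₀₁ := le_of_mul_eq_mul_of_le ha hab (hk₀.symm.trans hk₁)
    have hk := (egyptianOne_of_eq_mul (by omega) hk₀ hk₁ hk₂ hk₃).sorted_classification
      h₃ h₂₃ h₁₂ h₀₁
    have hσ := eq_lcm_of_gcd_eq_one hk₀ hk₁ hk₂ hwf
    rw [hσ] at hk₀ hk₁ hk₂ hk₃
    obtain rfl := Nat.eq_div_of_mul_eq_left (by omega) hk₀.symm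
    obtain rfl := Nat.eq_div_of_mul_eq_left (by omega) hk₁.symm
    obtain rfl := Nat.eq_div_of_mul_eq_left (by omega) hk₂.symm
    obtain rfl := Nat.eq_div_of_mul_eq_left (by omega) hk₃.symm
    rcases hk with h | h | h | h | h | h | h | h | h | h | h | h | h | h <;> cases h <;> norm_num
  · simp only [Set.insert_subset_iff, Set.singleton_subset_iff, Set.mem_ofPred_eq]
    norm_num
end

section
/- The kernel of the ring homomorphism C[u₀,u₁,u₂,v,s] → C[x,y,z,w] sending u₀ ↦ x⁵, u₁ ↦ xy, u₂ ↦ z, v ↦ w, s ↦ y⁵ is the principal ideal generated by u₀s − u₁⁵. -/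
open MvPolynomial

noncomputable section KernelVeronese

private def Vv : Fin 5 → MvPolynomial (Fin 4) ℂ :=
  ![(X 0)^5, X 0 * X 1, X 2, X 3, (X 1)^5]

private def σf (m : Fin 5 →₀ ℕ) : Fin 4 →₀ ℕ :=
  Finsupp.equivFunOnFinite.symm ![5 * m 0 + m 1, m 1 + 5 * m 4, m 2, m 3]

private lemma σf_apply (m : Fin 5 →₀ ℕ) :
    σf m 0 = 5 * m 0 + m 1 ∧ σf m 1 = m 1 + 5 * m 4 ∧ σf m 2 = m 2 ∧ σf m 3 = m 3 := by
  refine ⟨?_, ?_, ?_, ?_⟩ <;> simp [σf]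

private lemma aeval_monomial_one (m : Fin 5 →₀ ℕ) :
    aeval Vv (monomial m (1 : ℂ)) = monomial (σf m) 1 := by
  rw [aeval_monomial, monomial_eq]
  rw [Finsupp.prod_fintype _ _ (fun i => pow_zero _),
    Finsupp.prod_fintype _ _ (fun i => pow_zero _)]
  rw [Fin.prod_univ_five, Fin.prod_univ_four]
  obtain ⟨h0, h1, h2, h3⟩ := σf_apply m
  rw [h0, h1, h2, h3]
  simp only [Vv, Matrix.cons_val_zero, Matrix.cons_val_one, Matrix.head_cons,
    Matrix.cons_val_two, Matrix.tail_cons, Matrix.cons_val_three, Matrix.cons_val_four]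
  simp only [algebraMap_eq, C_1, one_mul]
  ring

private lemma σf_inj {m m' : Fin 5 →₀ ℕ} (hm : m 1 < 5) (hm' : m' 1 < 5)
    (h : σf m = σf m') : m = m' := by
  obtain ⟨h0, h1, h2, h3⟩ := σf_apply m
  obtain ⟨h0', h1', h2', h3'⟩ := σf_apply m'
  have e0 : (5 : ℕ) * m 0 + m 1 = 5 * m' 0 + m' 1 := by
    rw [← h0, ← h0', h]
  have e1 : m 1 + 5 * m 4 = m' 1 + 5 * m' 4 := by rw [← h1, ← h1', h]
  have e2 : m 2 = m' 2 := by rw [← h2, ← h2', h]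
  have e3 : m 3 = m' 3 := by rw [← h3, ← h3', h]
  ext i
  fin_cases i
  · show m 0 = m' 0; omega
  · show m 1 = m' 1; omega
  · show m 2 = m' 2; omega
  · show m 3 = m' 3; omega
  · show m 4 = m' 4; omega

/-- Injectivity on reduced polynomials. -/
private lemma reduced_inj (r : MvPolynomial (Fin 5) ℂ)
    (hs : ∀ m ∈ r.support, m 1 < 5) (h0 : aeval Vv r = 0) : r = 0 := by
  have key : aeval Vv r = ∑ m ∈ r.support, monomial (σf m) (coeff m r) := by
    conv_lhs => rw [r.as_sum]
    rw [map_sum]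
    refine Finset.sum_congr rfl fun m _ => ?_
    have : (monomial m (coeff m r)) = (coeff m r) • monomial m (1 : ℂ) := by
      rw [smul_monomial, smul_eq_mul, mul_one]
    rw [this, map_smul, aeval_monomial_one, smul_monomial, smul_eq_mul, mul_one]
  ext m₀
  rw [coeff_zero]
  by_cases hm₀ : m₀ ∈ r.support
  · have : coeff (σf m₀) (aeval Vv r) = coeff m₀ r := by
      rw [key, coeff_sum]
      rw [Finset.sum_eq_single m₀]
      · simp [coeff_monomial]
      · intro m hm hne
        rw [coeff_monomial, if_neg]
        intro he
        exact hne (σf_inj (hs m hm) (hs m₀ hm₀) he)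
      · intro h; exact absurd hm₀ h
    rw [h0, coeff_zero] at this
    exact this.symm
  · exact notMem_support_iff.mp hm₀

private def EE : MvPolynomial (Fin 5) ℂ ≃ₐ[ℂ] Polynomial (MvPolynomial (Fin 4) ℂ) :=
  (renameEquiv ℂ (Equiv.swap 0 1)).trans (finSuccEquiv ℂ 4)

private def hpoly : Polynomial (MvPolynomial (Fin 4) ℂ) :=
  Polynomial.X ^ 5 - Polynomial.C (X 0 * X 3)

private lemma EE_g : EE (X 0 * X 4 - (X 1)^5 : MvPolynomial (Fin 5) ℂ) = - hpoly := by
  have e0 : EE (X 0) = Polynomial.C (X 0) := by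
    rw [EE, AlgEquiv.trans_apply, renameEquiv_apply, rename_X, Equiv.swap_apply_left,
      show (1 : Fin 5) = (0 : Fin 4).succ from rfl, finSuccEquiv_X_succ]
  have e1 : EE (X 1) = Polynomial.X := by
    rw [EE, AlgEquiv.trans_apply, renameEquiv_apply, rename_X, Equiv.swap_apply_right,
      finSuccEquiv_X_zero]
  have e4 : EE (X 4) = Polynomial.C (X 3) := by
    rw [EE, AlgEquiv.trans_apply, renameEquiv_apply, rename_X,
      Equiv.swap_apply_of_ne_of_ne (by decide) (by decide),
      show (4 : Fin 5) = (3 : Fin 4).succ from rfl, finSuccEquiv_X_succ]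
  rw [map_sub, map_mul, map_pow, e0, e1, e4, hpoly, ← Polynomial.C_mul]
  ring

private lemma hpoly_monic : hpoly.Monic :=
  Polynomial.monic_X_pow_sub_C _ (by norm_num)

private lemma hpoly_degree : hpoly.degree = 5 :=
  Polynomial.degree_X_pow_sub_C (by norm_num) _

private lemma span_le_ker :
    Ideal.span {(X 0 * X 4 - (X 1)^5 : MvPolynomial (Fin 5) ℂ)} ≤
      RingHom.ker (aeval Vv : MvPolynomial (Fin 5) ℂ →ₐ[ℂ] MvPolynomial (Fin 4) ℂ) := by
  rw [Ideal.span_le, Set.singleton_subset_iff]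
  show aeval Vv (X 0 * X 4 - (X 1)^5 : MvPolynomial (Fin 5) ℂ) = 0
  simp only [map_sub, map_mul, map_pow, aeval_X, Vv]
  norm_num [Matrix.cons_val_zero, Matrix.cons_val_one, Matrix.head_cons, Matrix.cons_val]
  rw [show (![(X 0)^5, X 0 * X 1, X 2, X 3, (X 1)^5] : Fin 5 → MvPolynomial (Fin 4) ℂ) 4 = (X 1)^5 from rfl]
  ring

/-- The kernel of u₀ ↦ x⁵, u₁ ↦ xy, u₂ ↦ z, v ↦ w, s ↦ y⁵ is the principal
ideal (u₀s − u₁⁵). -/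
theorem kernel_veronese_1_4_5_10 :
    RingHom.ker (MvPolynomial.aeval
        (![(X 0)^5, X 0 * X 1, X 2, X 3, (X 1)^5] :
          Fin 5 → MvPolynomial (Fin 4) ℂ) :
      MvPolynomial (Fin 5) ℂ →ₐ[ℂ] MvPolynomial (Fin 4) ℂ) =
    Ideal.span {X 0 * X 4 - (X 1)^5} := by
  have hVv : (![(X 0)^5, X 0 * X 1, X 2, X 3, (X 1)^5] :
      Fin 5 → MvPolynomial (Fin 4) ℂ) = Vv := rfl
  rw [hVv]
  refine le_antisymm ?_ span_le_ker
  intro f hf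
  have hf0 : aeval Vv f = 0 := hf
  set q := EE f %ₘ hpoly with hq
  set r := EE.symm q with hrdef
  -- f - r lies in the span
  have hEsymm_h : EE.symm hpoly = -(X 0 * X 4 - (X 1)^5) := by
    have := congrArg EE.symm EE_g
    rw [AlgEquiv.symm_apply_apply, map_neg] at this
    rw [← neg_eq_iff_eq_neg, this]
  have hfr : f - r ∈ Ideal.span {(X 0 * X 4 - (X 1)^5 : MvPolynomial (Fin 5) ℂ)} := by
    have hdiv : EE f - q = hpoly * (EE f /ₘ hpoly) := by
      conv_lhs => rw [← Polynomial.modByMonic_add_div (EE f) hpoly]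
      ring
    have : f - r = EE.symm (EE f - q) := by
      rw [map_sub, AlgEquiv.symm_apply_apply]
    rw [this, hdiv, map_mul, hEsymm_h]
    exact Ideal.mul_mem_right _ _ (neg_mem (Ideal.subset_span rfl))
  -- r is reduced
  have hqdeg : q.degree < (5 : ℕ) := by
    have := Polynomial.degree_modByMonic_lt (EE f) hpoly_monic
    rw [hpoly_degree] at this
    exact_mod_cast this
  have hred : ∀ m ∈ r.support, m 1 < 5 := by
    intro m hm
    by_contra hge
    push_neg at hge
    apply (mem_support_iff.mp hm)
    set d : Fin 5 →₀ ℕ := Finsupp.mapDomain (Equiv.swap (0:Fin 5) 1) m with hd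
    have hmd : Finsupp.mapDomain (Equiv.swap (0:Fin 5) 1) d = m := by
      rw [hd, ← Finsupp.mapDomain_comp,
        show (⇑(Equiv.swap (0:Fin 5) 1) ∘ ⇑(Equiv.swap (0:Fin 5) 1)) = id from by
          ext j; simp [Equiv.swap_apply_self], Finsupp.mapDomain_id]
    have hcoeff : coeff m r = coeff d ((finSuccEquiv ℂ 4).symm q) := by
      rw [hrdef]
      show coeff m (rename (Equiv.swap (0:Fin 5) 1) ((finSuccEquiv ℂ 4).symm q)) = _
      rw [← hmd, coeff_rename_mapDomain _ (Equiv.injective _)]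
    have hd0 : d 0 = m 1 := by
      rw [hd, Finsupp.mapDomain_equiv_apply]
      simp
    have : coeff d ((finSuccEquiv ℂ 4).symm q) = coeff d.tail (q.coeff (d 0)) := by
      conv_rhs => rw [show q = finSuccEquiv ℂ 4 ((finSuccEquiv ℂ 4).symm q) from
        (AlgEquiv.apply_symm_apply _ _).symm]
      rw [finSuccEquiv_coeff_coeff, Finsupp.cons_tail]
    rw [hcoeff, this, Polynomial.coeff_eq_zero_of_degree_lt, coeff_zero]
    refine lt_of_lt_of_le hqdeg ?_
    rw [hd0]
    exact_mod_cast Nat.cast_le.mpr hge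
  have hr0 : aeval Vv r = 0 := by
    have h1 : aeval Vv (f - r) = 0 := span_le_ker hfr
    rw [map_sub, hf0, zero_sub, neg_eq_zero] at h1
    exact h1
  have : r = 0 := reduced_inj r hred hr0
  rw [← sub_zero f, ← this]
  exact hfr

end KernelVeronese
end

section
/- Let f₅ ∈ C[u₀,u₁,u₂,v] be homogeneous of weighted degree 5 with deg uᵢ = 1, deg v = 2, and suppose f₅ restricted to v = α(u₀,u₁,u₂) (α a homogeneous quadric) equals u₀g₄(u₀,u₁,u₂) + u₁⁵ for some homogeneous quartic g₄. Then f₅ ≡ u₁⁵ + λβ(u,v)(v − α(u)) (mod u₀) for some constant λ and homogeneous cubic β; in particular one can choose f₅ of the form u₀f₄(u,v) + u₁⁵ with f₄ homogeneous of degree 4, cutting out the same curve {f₅ = 0, v = α(u)}. -/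
open MvPolynomial

lemma comp_mul_homog {σ : Type*} (w : σ → ℕ) (a b : MvPolynomial σ ℂ) (m n : ℕ)
    (hb : IsWeightedHomogeneous w b m) :
    weightedHomogeneousComponent w (n + m) (a * b) =
      weightedHomogeneousComponent w n a * b := by
  classical
  have hfin := weightedHomogeneousComponent_finsupp (w := w) a
  set T : Finset ℕ := hfin.toFinset ∪ {n} with hT
  have ha : a = ∑ k ∈ T, weightedHomogeneousComponent w k a := by
    rw [← finsum_eq_finset_sum_of_support_subset]
    · rw [sum_weightedHomogeneousComponent]
    · intro k hk
      simp only [hT, Finset.coe_union, Set.Finite.coe_toFinset]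
      exact Set.mem_union_left _ ((Set.Finite.mem_toFinset hfin).2 hk)
  calc weightedHomogeneousComponent w (n + m) (a * b)
      = ∑ k ∈ T, weightedHomogeneousComponent w (n + m)
          (weightedHomogeneousComponent w k a * b) := by
        conv_lhs => rw [ha, Finset.sum_mul, map_sum]
    _ = ∑ k ∈ T, if k = n then weightedHomogeneousComponent w k a * b else 0 := by
        refine Finset.sum_congr rfl fun k _ => ?_
        have hk : IsWeightedHomogeneous w (weightedHomogeneousComponent w k a * b) (k + m) :=
          (weightedHomogeneousComponent_isWeightedHomogeneous k a).mul hb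
        by_cases h : k = n
        · subst h
          rw [if_pos rfl, hk.weightedHomogeneousComponent_same]
        · rw [if_neg h, hk.weightedHomogeneousComponent_ne]
          intro hc
          exact h (Nat.add_right_cancel hc.symm)
    _ = weightedHomogeneousComponent w n a * b := by
        rw [Finset.sum_ite_eq' T n (fun k => weightedHomogeneousComponent w k a * b)]
        simp [hT]

/-- If a weighted quintic f₅ in C[u₀,u₁,u₂,v] (deg uᵢ = 1, deg v = 2)
restricts on v = α(u) to u₀g₄(u) + u₁⁵, then f₅ ≡ u₁⁵ + λβ(v−α) (mod u₀)
for some constant λ and cubic β, and the curve {f₅ = 0, v = α} is cut out by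
some u₀f₄ + u₁⁵ together with v − α. -/
theorem quintic_normal_form (f₅ α g₄ : MvPolynomial (Fin 4) ℂ)
    (hf : IsWeightedHomogeneous (![1,1,1,2] : Fin 4 → ℕ) f₅ 5)
    (hα : IsWeightedHomogeneous (![1,1,1,2] : Fin 4 → ℕ) α 2)
    (hαs : α ∈ MvPolynomial.supported ℂ ({0,1,2} : Set (Fin 4)))
    (hg : IsWeightedHomogeneous (![1,1,1,2] : Fin 4 → ℕ) g₄ 4)
    (hgs : g₄ ∈ MvPolynomial.supported ℂ ({0,1,2} : Set (Fin 4)))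
    (hsub : MvPolynomial.aeval
        (fun i : Fin 4 => if i = 3 then α else X i) f₅ =
      X 0 * g₄ + (X 1)^5) :
    (∃ lam : ℂ, ∃ β : MvPolynomial (Fin 4) ℂ,
      IsWeightedHomogeneous (![1,1,1,2] : Fin 4 → ℕ) β 3 ∧
      f₅ - ((X 1)^5 + C lam * β * (X 3 - α)) ∈ Ideal.span {(X 0 : MvPolynomial (Fin 4) ℂ)}) ∧
    (∃ f₄ : MvPolynomial (Fin 4) ℂ,
      IsWeightedHomogeneous (![1,1,1,2] : Fin 4 → ℕ) f₄ 4 ∧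
      Ideal.span {f₅, X 3 - α} =
        Ideal.span {X 0 * f₄ + (X 1)^5, X 3 - α}) := by
  classical
  set w : Fin 4 → ℕ := ![1,1,1,2] with hw
  set σf : Fin 4 → MvPolynomial (Fin 4) ℂ := fun i => if i = 3 then α else X i with hσf
  set I : Ideal (MvPolynomial (Fin 4) ℂ) := Ideal.span {X 3 - α} with hI
  -- Step A : f₅ - aeval σf f₅ ∈ I
  have hmemI : f₅ - aeval σf f₅ ∈ I := by
    have key : (Ideal.Quotient.mkₐ ℂ I).comp (aeval σf) = Ideal.Quotient.mkₐ ℂ I := by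
      apply MvPolynomial.algHom_ext
      intro i
      simp only [AlgHom.comp_apply, aeval_X, Ideal.Quotient.mkₐ_eq_mk]
      by_cases h : i = 3
      · subst h
        simp only [hσf, if_pos rfl]
        rw [Ideal.Quotient.mk_eq_mk_iff_sub_mem]
        have : -(X 3 - α) ∈ I := I.neg_mem (Ideal.subset_span rfl)
        simpa using this
      · simp [hσf, h]
    have := congrArg (fun φ => φ f₅) key
    simp only [AlgHom.comp_apply, Ideal.Quotient.mkₐ_eq_mk] at this
    rw [← Ideal.Quotient.mk_eq_mk_iff_sub_mem]
    exact this.symm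
  rw [hsub] at hmemI
  rw [hI, Ideal.mem_span_singleton] at hmemI
  obtain ⟨q, hq⟩ := hmemI
  -- so f₅ = X0 g₄ + X1^5 + q * (X3 - α)
  have heq : f₅ = X 0 * g₄ + (X 1)^5 + q * (X 3 - α) := by
    rw [mul_comm q]
    linear_combination hq
  -- homogeneity facts
  have hX0 : IsWeightedHomogeneous w (X 0 : MvPolynomial (Fin 4) ℂ) 1 := by
    have := isWeightedHomogeneous_X ℂ w (0 : Fin 4)
    simpa [hw] using this
  have hX1 : IsWeightedHomogeneous w (X 1 : MvPolynomial (Fin 4) ℂ) 1 := by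
    have := isWeightedHomogeneous_X ℂ w (1 : Fin 4)
    simpa [hw] using this
  have hX3α : IsWeightedHomogeneous w (X 3 - α) 2 := by
    have h3 := isWeightedHomogeneous_X ℂ w (3 : Fin 4)
    have : w 3 = 2 := by simp [hw]
    rw [this] at h3
    exact (mem_weightedHomogeneousSubmodule ℂ w 2 _).1
      (Submodule.sub_mem _ ((mem_weightedHomogeneousSubmodule ℂ w 2 _).2 h3)
        ((mem_weightedHomogeneousSubmodule ℂ w 2 _).2 hα))
  have hX0g : IsWeightedHomogeneous w (X 0 * g₄) 5 := by
    have := hX0.mul hg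
    simpa using this
  have hX15 : IsWeightedHomogeneous w ((X 1 : MvPolynomial (Fin 4) ℂ)^5) 5 := by
    have h5 : ((X 1 : MvPolynomial (Fin 4) ℂ))^5 = X 1 * (X 1 * (X 1 * (X 1 * X 1))) := by ring
    rw [h5]
    exact hX1.mul (hX1.mul (hX1.mul (hX1.mul hX1)))
  set β : MvPolynomial (Fin 4) ℂ := weightedHomogeneousComponent w 3 q with hβ
  have hβh : IsWeightedHomogeneous w β 3 :=
    weightedHomogeneousComponent_isWeightedHomogeneous 3 q
  -- take degree-5 components
  have hkey : f₅ = X 0 * g₄ + (X 1)^5 + β * (X 3 - α) := by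
    have := congrArg (fun p => weightedHomogeneousComponent w 5 p) heq
    simp only [map_add] at this
    rw [hf.weightedHomogeneousComponent_same, hX0g.weightedHomogeneousComponent_same,
      hX15.weightedHomogeneousComponent_same,
      show (5 : ℕ) = 3 + 2 from rfl, comp_mul_homog w q (X 3 - α) 2 3 hX3α] at this
    exact this
  constructor
  · refine ⟨1, β, hβh, ?_⟩
    rw [Ideal.mem_span_singleton]
    refine ⟨g₄, ?_⟩
    rw [hkey]
    ring_nf
    rw [map_one]
    ring
  · refine ⟨g₄, hg, ?_⟩
    apply le_antisymm
    · rw [Ideal.span_le]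
      rintro x (rfl | rfl)
      · rw [SetLike.mem_coe, Ideal.mem_span_pair]
        exact ⟨1, β, by rw [hkey]; ring⟩
      · exact Ideal.subset_span (Or.inr rfl)
    · rw [Ideal.span_le]
      rintro x (rfl | rfl)
      · rw [SetLike.mem_coe, Ideal.mem_span_pair]
        exact ⟨1, -β, by rw [hkey]; ring⟩
      · exact Ideal.subset_span (Or.inr rfl)
end
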